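/- arXiv:2405.05582 — 5 statements merged into one kernel-verified Lean document; each statement's English description precedes it below -/
import Mathlib

section
/- Let E be a vector bundle of rank r ≥ 2 on a smooth projective variety X and π : P(E) → X the projection. A class y₀ξ + π*γ is nef on P(E) if and only if y₀ ≥ 0 and y₀·μ_min(η_C*(E|_C)) + γ·C ≥ 0 for every irreducible curve C ⊆ X, where η_C is the normalization of C. -/
/-- Nef cone of a projective bundle.
Same abstract model as for the ample cone: `F0` is the class `ξ^{r-2}·F` and `G C`
the class `ξ^{r-1}·π*[C] − l_C·ξ^{r-2}·F` with
`l_C = deg(η_C*(E|_C)) − μ_min(η_C*(E|_C))`; the closed cone of curves of `P(E)` is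
the closure of the convex cone they generate, and nefness of a divisor class means
nonnegativity against the closed cone of curves.  Conclusion: `y₀ξ + π*γ` is nef iff
`y₀ ≥ 0` and `y₀·μ_min(η_C*(E|_C)) + γ·C ≥ 0` for every irreducible curve `C ⊆ X`. -/
theorem nef_cone_projective_bundle
    (Curve : Type)
    (N1 : Type) [NormedAddCommGroup N1] [NormedSpace ℝ N1] [FiniteDimensional ℝ N1]
    (r : ℕ) (hr : 2 ≤ r)
    (F0 : N1) (G : Curve → N1)
    (hF0 : F0 ≠ 0) (hG : ∀ C, G C ≠ 0)
    (μmin : Curve → ℝ)                  -- μ_min(η_C*(E|_C))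
    (y₀ : ℝ) (γ : Curve → ℝ)            -- γ C = γ · C
    (pair : N1 →ₗ[ℝ] ℝ)                 -- intersection with the class y₀ξ + π*γ
    (hpairF : pair F0 = y₀)
    (hpairG : ∀ C, pair (G C) = y₀ * μmin C + γ C)
    (NEbar : Set N1)                    -- the closed cone of curves of P(E)
    (h_NE : NEbar = closure {x | ∃ f : (Option Curve) →₀ ℝ,
        (∀ i, 0 ≤ f i) ∧ x = f.sum (fun i a => a • (Option.elim i F0 G))})
    (Nef : Prop)                        -- nefness of y₀ξ + π*γ on P(E)
    (h_nef : Nef ↔ ∀ x ∈ NEbar, 0 ≤ pair x) :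
    Nef ↔ (0 ≤ y₀ ∧ ∀ C, 0 ≤ y₀ * μmin C + γ C) := by
  subst h_NE
  rw [h_nef]
  have hmem : ∀ i : Option Curve, (Option.elim i F0 G) ∈
      closure {x : N1 | ∃ f : (Option Curve) →₀ ℝ,
        (∀ i, 0 ≤ f i) ∧ x = f.sum (fun i a => a • (Option.elim i F0 G))} := by
    intro i
    apply subset_closure
    refine ⟨Finsupp.single i 1, ?_, ?_⟩
    · intro j
      classical
      rw [Finsupp.single_apply]
      split <;> norm_num
    · rw [Finsupp.sum_single_index] <;> simp
  constructor
  · intro h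
    refine ⟨?_, fun C => ?_⟩
    · have := h _ (hmem none)
      simpa [hpairF] using this
    · have := h _ (hmem (some C))
      simpa [hpairG] using this
  · rintro ⟨hy, hC⟩ x hx
    have hcont : Continuous pair := pair.continuous_of_finiteDimensional
    have hclosed : IsClosed {x : N1 | 0 ≤ pair x} :=
      isClosed_le continuous_const hcont
    have hsub : {x : N1 | ∃ f : (Option Curve) →₀ ℝ,
        (∀ i, 0 ≤ f i) ∧ x = f.sum (fun i a => a • (Option.elim i F0 G))} ⊆
        {x : N1 | 0 ≤ pair x} := by
      rintro x ⟨f, hf, rfl⟩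
      simp only [Set.mem_setOf_eq, map_finsuppSum]
      apply Finset.sum_nonneg
      intro i _
      show 0 ≤ pair (f i • i.elim F0 G)
      rw [map_smul]
      apply mul_nonneg (hf i) ?_
      show 0 ≤ pair (i.elim F0 G)
      cases i with
      | none => simpa [hpairF] using hy
      | some C => simpa [hpairG] using hC C
    exact hclosed.closure_subset_iff.mpr hsub hx
end

section
/- Let E be a strictly nef vector bundle of rank r ≥ 2 on a smooth projective variety X of dimension n, and π : P(E) → X the projection. Suppose Serrano's conjecture holds for every strictly nef divisor on X (i.e. K_X + tD' is ample for t > n+1 whenever D' is strictly nef on X). Then for any strictly nef divisor D' on X and any positive integer m, the divisor K_{P(E)} + t(mξ + π*D') is ample for all t > n + r. -/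
/-- Theorem 3.1 of the paper.  `E` is a strictly nef vector bundle of
rank `r ≥ 2` on a smooth projective `X` of dimension `n`; Serrano's conjecture is
assumed for strictly nef divisors on `X`.  Abstract model: `Curve` indexes the
irreducible curves of `X`; `μmin C = μ_min(η_C*(E|_C))`, `KX C = K_X·C`,
`detE C = det(E)·C`, `D' C = D'·C`.  Strict nefness of `E` gives `μmin C ≥ 0` and
`det(E)·C ≥ 0`; `D'` is strictly nef; `AmpleX` is ampleness of divisor classes on `X`
(recorded via their intersection functions), with the property that ample classes meet
every curve positively; Serrano's conjecture on `X` says `K_X + tD'` is ample for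
`t > n+1`.  `AmplePE y₀ γ` is ampleness of `y₀ξ + π*γ` on `P(E)`, characterized by
`y₀ > 0` and `y₀·μmin C + γ·C > 0` for all curves `C`.  Since
`K_{P(E)} + t(mξ + π*D') = (tm−r)ξ + π*(K_X + tD' + det E)`, the conclusion is that
this class is ample for all real `t > n + r`. -/
theorem serrano_projective_bundle_inductive
    (Curve : Type) (n r : ℕ) (hr : 2 ≤ r)
    (μmin KX detE D' : Curve → ℝ)
    (h_nef : ∀ C, 0 ≤ μmin C)            -- E strictly nef ⇒ E nef
    (h_detE : ∀ C, 0 ≤ detE C)           -- det(E) nef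
    (h_D' : ∀ C, 0 < D' C)               -- D' strictly nef on X
    (AmpleX : (Curve → ℝ) → Prop)
    (h_ampleX_pos : ∀ δ, AmpleX δ → ∀ C, 0 < δ C)
    (h_serrano : ∀ t : ℝ, (n : ℝ) + 1 < t → AmpleX (fun C => KX C + t * D' C))
    (AmplePE : ℝ → (Curve → ℝ) → Prop)
    (h_crit : ∀ y₀ γ, AmplePE y₀ γ ↔ (0 < y₀ ∧ ∀ C, 0 < y₀ * μmin C + γ C))
    (m : ℕ) (hm : 0 < m) (t : ℝ) (ht : (n : ℝ) + r < t) :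
    AmplePE (t * m - r) (fun C => KX C + t * D' C + detE C) := by
  have hr' : (r : ℝ) ≤ (n : ℝ) + r := by simp [Nat.cast_nonneg]
  have htr : (r : ℝ) < t := lt_of_le_of_lt hr' ht
  have hm1 : (1 : ℝ) ≤ (m : ℝ) := by exact_mod_cast hm
  have ht0 : 0 < t := lt_trans (by positivity) htr
  have hy : 0 < t * m - r := by nlinarith
  rw [h_crit]
  refine ⟨hy, fun C => ?_⟩
  have hamp := h_ampleX_pos _ (h_serrano t (by
    have : (1:ℝ) ≤ r := by exact_mod_cast (le_trans one_le_two hr)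
    linarith)) C
  have := h_nef C
  have := h_detE C
  nlinarith
end

section
/- Let E be an ample vector bundle of rank r ≥ 2 on a smooth projective variety X of dimension n with K_X + det(E) numerically trivial, and π : P(E) → X the projection. Then for any divisor D = mξ + π*N with m > 0 and N nef, K_{P(E)} + tD is ample for all t ≥ n + r + 1. -/
/-- Theorem 3.3, case (2).  `E` is an ample vector bundle of rank
`r ≥ 2` on a smooth projective `X` of dimension `n` with `K_X + det(E) ≡ 0`.
Abstract model: `Curve` indexes the irreducible curves of `X`;
`μmin C = μ_min(η_C*(E|_C)) > 0` (ampleness of `E`),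
`KX C + detE C = 0` (numerical triviality of `K_X + det E`), `N C ≥ 0` (`N` nef).
`Ample y₀ γ` is ampleness of `y₀ξ + π*γ` on `P(E)`, characterized by `y₀ > 0` and
`y₀·μmin C + γ·C > 0` for all curves.  Since
`K_{P(E)} + t(mξ + π*N) = (tm − r)ξ + π*(K_X + det E + tN)`, the conclusion is that
this class is ample for all `t ≥ n + r + 1`. -/
theorem serrano_ample_KX_plus_detE_trivial
    (Curve : Type) (n r : ℕ) (hr : 2 ≤ r)
    (μmin KX detE N : Curve → ℝ)
    (h_amp : ∀ C, 0 < μmin C)             -- E ample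
    (h_triv : ∀ C, KX C + detE C = 0)     -- K_X + det(E) ≡ 0
    (h_N : ∀ C, 0 ≤ N C)                  -- N nef
    (Ample : ℝ → (Curve → ℝ) → Prop)
    (h_crit : ∀ y₀ γ, Ample y₀ γ ↔ (0 < y₀ ∧ ∀ C, 0 < y₀ * μmin C + γ C))
    (m : ℕ) (hm : 0 < m) (t : ℝ) (ht : (n : ℝ) + r + 1 ≤ t) :
    Ample (t * m - r) (fun C => KX C + detE C + t * N C) := by
  have ht0 : (0:ℝ) < t := lt_of_lt_of_le (show (0:ℝ) < (n:ℝ) + r + 1 by positivity) ht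
  have hy : (0:ℝ) < t * m - r := by
    have hm1 : (1:ℝ) ≤ (m:ℝ) := by exact_mod_cast hm
    nlinarith [(Nat.cast_nonneg n : (0:ℝ) ≤ n), (Nat.cast_nonneg r : (0:ℝ) ≤ r)]
  rw [h_crit]
  refine ⟨hy, fun C => ?_⟩
  have := h_triv C
  have := h_N C
  have := h_amp C
  nlinarith
end

section
/- Let V be a vector bundle of rank r on a smooth projective variety X with K_X numerically trivial, and π : P(V) → X the projection. Then −K_{P(V)} is nef if and only if η_C*(V|_C) is semistable for every irreducible curve C ⊆ X, where η_C is the normalization of C. -/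
/-!
Since `K_X ≡ 0`, the nefness criterion for `−K_{P(V)} = rξ + π*(−K_X − det V)` reduces to
`det(V)·C ≤ r·μ_min(η_C*(V|_C))` on every curve. The reverse inequality always holds, so nefness
says exactly that the minimal slope equals the slope `det(V)·C / r`, i.e. semistability.
-/

theorem sub_nonneg_iff_eq_div_of_mul_le {K : Type*} [Field K] [LinearOrder K]
    [IsStrictOrderedRing K] {r μ d : K} (hr : 0 < r) (hμ : r * μ ≤ d) :
    0 ≤ r * μ - d ↔ μ = d / r := by
  rw [sub_nonneg, eq_div_iff hr.ne', mul_comm μ]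
  exact ⟨hμ.antisymm, ge_of_eq⟩

/-- Theorem 4.12, second part.  If `K_X ≡ 0`, then `−K_{P(V)}` is nef
iff `η_C*(V|_C)` is semistable for every irreducible curve `C ⊆ X`.
Abstract model: `Curve` indexes the irreducible curves of `X`;
`μmin C = μ_min(η_C*(V|_C))`, `KX C = K_X·C = 0` (numerical triviality of `K_X`),
`detV C = det(V)·C = deg(η_C*(V|_C)) ≥ r·μ_min(η_C*(V|_C))`, and a bundle on a
smooth curve is semistable iff its minimal slope equals its slope `deg / rank`.
`Nef y₀ γ` records nefness of `y₀ξ + π*γ` on `P(V)`, characterized by `y₀ ≥ 0` and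
`y₀·μmin C + γ·C ≥ 0` for all curves; `−K_{P(V)} = rξ + π*(−K_X − det V)`. -/
theorem anticanonical_nef_iff_semistable_restrictions
    (Curve : Type) (r : ℕ) (hr : 1 ≤ r)
    (μmin KX detV : Curve → ℝ)
    (h_KX : ∀ C, KX C = 0)                        -- K_X numerically trivial
    (h_deg : ∀ C, (r : ℝ) * μmin C ≤ detV C)
    (Semistable : Curve → Prop)                   -- semistability of η_C*(V|_C)
    (h_ss : ∀ C, Semistable C ↔ μmin C = detV C / r)
    (Nef : ℝ → (Curve → ℝ) → Prop)
    (h_crit : ∀ y₀ γ, Nef y₀ γ ↔ (0 ≤ y₀ ∧ ∀ C, 0 ≤ y₀ * μmin C + γ C)) :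
    Nef r (fun C => -KX C - detV C) ↔ ∀ C, Semistable C := by
  have hr_pos : (0 : ℝ) < r := by exact_mod_cast hr
  have nonneg_iff_semistable (C : Curve) :
      0 ≤ r * μmin C + (-KX C - detV C) ↔ Semistable C := by
    rw [h_ss, h_KX, neg_zero, zero_sub, ← sub_eq_add_neg]
    exact sub_nonneg_iff_eq_div_of_mul_le hr_pos (h_deg C)
  rw [h_crit, forall_congr' nonneg_iff_semistable]
  exact and_iff_right hr_pos.le
end

section
/- Let E be a torus-equivariant strictly nef vector bundle of rank r on a smooth projective toric variety X of dimension n with K_X nef, and π : P(E) → X the projection. Then for every positive integer m and nef class N on X, the divisor K_{P(E)} + t(mξ + π*N) is ample for all t ≥ r + n + 1. -/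
/-- Serrano's conjecture for equivariant bundles over toric varieties.
`E` is a torus-equivariant strictly nef bundle of rank `r` on a smooth projective
toric variety `X` of dimension `n` with `K_X` nef.  Abstract model: `ICurve` indexes
the (finitely many) torus-invariant curves `l_i ≅ P¹` of `X`;
`μmin i = μ_min(E|_{l_i}) > 0` (a strictly nef bundle restricts to an ample bundle on
each invariant `P¹`), `KX i = K_X·l_i ≥ 0` (`K_X` nef), `N i = N·l_i ≥ 0` (`N` nef),
and `deg(E|_{l_i}) ≥ r·μ_min(E|_{l_i})`.  `Ample y₀ γ` records ampleness of
`y₀ξ + π*γ` on `P(E)`, characterized (toric cone of curves) by `y₀ > 0` and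
`y₀·μmin i + γ·l_i > 0` for every invariant curve.  Since
`K_{P(E)} + t(mξ + π*N) = (tm − r)ξ + π*(K_X + det E + tN)`, the conclusion is that
this class is ample for all `t ≥ r + n + 1`. -/
theorem serrano_toric
    (ICurve : Type) (n r : ℕ) (hr : 1 ≤ r)
    (μmin KX detE N : ICurve → ℝ)
    (h_amp : ∀ i, 0 < μmin i)              -- E|_{l_i} ample on each invariant curve
    (h_KX : ∀ i, 0 ≤ KX i)                 -- K_X nef
    (h_N : ∀ i, 0 ≤ N i)                   -- N nef
    (h_deg : ∀ i, (r : ℝ) * μmin i ≤ detE i)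
    (Ample : ℝ → (ICurve → ℝ) → Prop)
    (h_crit : ∀ y₀ γ, Ample y₀ γ ↔ (0 < y₀ ∧ ∀ i, 0 < y₀ * μmin i + γ i))
    (m : ℕ) (hm : 0 < m) (t : ℝ) (ht : (r : ℝ) + n + 1 ≤ t) :
    Ample (t * m - r) (fun i => KX i + detE i + t * N i) := by
  have hm1 : (1:ℝ) ≤ m := by exact_mod_cast hm
  have ht0 : 0 < t := lt_of_lt_of_le (by positivity) ht
  have htm : (r:ℝ) < t * m := by
    calc (r:ℝ) < t := lt_of_lt_of_le (by nlinarith [Nat.cast_nonneg (α := ℝ) n]) ht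
    _ ≤ t * m := by nlinarith
  rw [h_crit]
  refine ⟨by linarith, fun i => ?_⟩
  have h1 := h_amp i
  have h2 := h_KX i
  have h3 := h_N i
  have h4 := h_deg i
  nlinarith
end
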